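/- Let R be a finite simply-connected region, V its vertex set, and V' a connected subset of V containing all boundary vertices of R. Let f and g be partial height functions defined on V' that agree modulo 4 and satisfy f ≤ g + 4 pointwise, each admitting at least one extension to a complete height function. Then for every vertex v ∈ V, the expected value of H(v) under μ_f is at most 4 more than the expected value of H(v) under μ_g. -/

import Mathlib

/-- A cell: a lattice unit square, identified by its lower-left corner. -/
abbrev Cell : Type := ℤ × ℤ

/-- A lattice vertex of the square grid. -/
abbrev Vertex : Type := ℤ × ℤ

/-- The four cells having `v` as a corner. -/
def cellsAt (v : Vertex) : Finset Cell :=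
  {(v.1 - 1, v.2 - 1), (v.1, v.2 - 1), (v.1 - 1, v.2), (v.1, v.2)}

/-- `v` is a vertex of the region `R` (a corner of one of its cells). -/
def IsVertexOf (R : Finset Cell) (v : Vertex) : Prop := ∃ c ∈ cellsAt v, c ∈ R

/-- `v` is a vertex on the boundary of the region `R`. -/
def IsBoundaryVertexOf (R : Finset Cell) (v : Vertex) : Prop :=
  IsVertexOf R v ∧ ∃ c ∈ cellsAt v, c ∉ R

/-- Adjacency of lattice vertices. -/
def VAdj (u v : Vertex) : Prop :=
  v = (u.1 + 1, u.2) ∨ v = (u.1 - 1, u.2) ∨ v = (u.1, u.2 + 1) ∨ v = (u.1, u.2 - 1)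

/-- The cell lying on the left of the directed edge from `u` to `v`
(for adjacent vertices `u`, `v`). -/
def leftCell (u v : Vertex) : Cell :=
  if v = (u.1 + 1, u.2) then (u.1, u.2)
  else if v = (u.1 - 1, u.2) then (u.1 - 1, u.2 - 1)
  else if v = (u.1, u.2 + 1) then (u.1 - 1, u.2)
  else (u.1, u.2 - 1)

/-- The cell `c` is black, under the checkerboard coloring selected by the flag `bc`. -/
def IsBlack (bc : Bool) (c : Cell) : Prop := ((c.1 + c.2) % 2 = 0) ↔ bc = true

/-- The edge joining adjacent vertices `u` and `v` lies on the boundary of the region `R`,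
i.e. exactly one of the two cells bordering the edge belongs to `R`. -/
def IsBoundaryEdge (R : Finset Cell) (u v : Vertex) : Prop :=
  (leftCell u v ∈ R ∧ leftCell v u ∉ R) ∨ (leftCell u v ∉ R ∧ leftCell v u ∈ R)

/-- A (partial) height function on the set of vertices `V'` of the region `R`: an
integer-valued function such that for all adjacent vertices `u`, `v` of `V'`, if the edge
`uv` lies on the boundary of `R` then `|h u - h v| = 1`, and if the directed edge from `u`
to `v` has a black square of `R` on its left then `h v - h u ∈ {1, -3}`. -/
def IsPartialHeightFn (bc : Bool) (R : Finset Cell) (V' : Set Vertex) (h : Vertex → ℤ) : Prop :=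
  ∀ u v : Vertex, u ∈ V' → v ∈ V' → VAdj u v →
    (IsBoundaryEdge R u v → |h u - h v| = 1) ∧
    (leftCell u v ∈ R → IsBlack bc (leftCell u v) → h v - h u = 1 ∨ h v - h u = -3)

/-- The set of vertices of the region `R`. -/
def vertexSet (R : Finset Cell) : Set Vertex := {v | IsVertexOf R v}

/-- The set of boundary vertices of the region `R`. -/
def boundaryVertexSet (R : Finset Cell) : Set Vertex := {v | IsBoundaryVertexOf R v}

/-- A complete height function on the region `R` (normalized to vanish off the vertex set
of `R`, so that the collection of complete height functions is finite). -/
def IsCompleteHeightFn (bc : Bool) (R : Finset Cell) (h : Vertex → ℤ) : Prop :=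
  IsPartialHeightFn bc R (vertexSet R) h ∧ ∀ v, ¬IsVertexOf R v → h v = 0

/-- The set of complete height functions on `R` extending the partial height function `f`
defined on `V'`. -/
def Extensions (bc : Bool) (R : Finset Cell) (V' : Set Vertex) (f : Vertex → ℤ) :
    Set (Vertex → ℤ) :=
  {h | IsCompleteHeightFn bc R h ∧ ∀ v ∈ V', h v = f v}

/-- Edge-adjacency of cells (the two unit squares share a side). -/
def CellAdj (a b : Cell) : Prop :=
  (a.1 = b.1 ∧ |a.2 - b.2| = 1) ∨ (a.2 = b.2 ∧ |a.1 - b.1| = 1)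

/-- A set of cells is connected under edge-adjacency. -/
def EdgeConnected (S : Set Cell) : Prop :=
  ∀ a ∈ S, ∀ b ∈ S, Relation.ReflTransGen (fun x y => CellAdj x y ∧ y ∈ S) a b

/-- A finite simply-connected region: nonempty, connected, and with connected complement. -/
def IsSimplyConnectedRegion (R : Finset Cell) : Prop :=
  R.Nonempty ∧ EdgeConnected (R : Set Cell) ∧ EdgeConnected ((R : Set Cell)ᶜ)

/-- A set of vertices is connected as an induced subgraph of the grid. -/
def VConnected (V' : Set Vertex) : Prop :=
  ∀ u ∈ V', ∀ v ∈ V', Relation.ReflTransGen (fun a b => VAdj a b ∧ b ∈ V') u v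

/-- The uniform probability mass function on a (finite) set `S` of height functions. -/
noncomputable def uniformOn (S : Set (Vertex → ℤ)) : (Vertex → ℤ) → ℝ :=
  S.indicator fun _ => ((S.ncard : ℝ))⁻¹

/-- The expected value of `H(v)` when `H` is chosen uniformly at random from the (finite)
set `S` of height functions. -/
noncomputable def heightExp (S : Set (Vertex → ℤ)) (v : Vertex) : ℝ :=
  (∑ᶠ h ∈ S, ((h v : ℤ) : ℝ)) / (S.ncard : ℝ)

/-- The probability of the event `E` when a height function is chosen uniformly at random
from the (finite) set `S`. -/
noncomputable def probOn (S E : Set (Vertex → ℤ)) : ℝ := ((S ∩ E).ncard : ℝ) / (S.ncard : ℝ)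

section Aux
variable {bc : Bool} {R : Finset Cell}

lemma leftCell_right (u : Vertex) : leftCell u (u.1+1, u.2) = (u.1, u.2) := by
  simp [leftCell]

lemma leftCell_left (u : Vertex) : leftCell u (u.1-1, u.2) = (u.1-1, u.2-1) := by
  rw [leftCell, if_neg, if_pos rfl]
  simp [Prod.ext_iff]; omega

lemma leftCell_up (u : Vertex) : leftCell u (u.1, u.2+1) = (u.1-1, u.2) := by
  rw [leftCell, if_neg, if_neg, if_pos rfl] <;> simp [Prod.ext_iff] <;> omega

lemma leftCell_down (u : Vertex) : leftCell u (u.1, u.2-1) = (u.1, u.2-1) := by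
  rw [leftCell, if_neg, if_neg, if_neg] <;> simp [Prod.ext_iff] <;> omega

lemma mem_cellsAt_iff (c : Cell) (v : Vertex) :
    c ∈ cellsAt v ↔ v = (c.1, c.2) ∨ v = (c.1+1, c.2) ∨ v = (c.1, c.2+1) ∨ v = (c.1+1, c.2+1) := by
  simp [cellsAt, Prod.ext_iff]; omega

lemma VAdj.symm' {u v : Vertex} (h : VAdj u v) : VAdj v u := by
  rcases h with h | h | h | h <;> subst h <;> simp [VAdj, Prod.ext_iff] <;> omega

end Aux
section Aux2
variable {bc : Bool} {R : Finset Cell}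

lemma leftCell_pr1 (a b : ℤ) : leftCell (a,b) (a+1,b) = (a,b) := by
  simpa using leftCell_right (a,b)
lemma leftCell_pr2 (a b : ℤ) : leftCell (a+1,b) (a,b) = (a,b-1) := by
  have := leftCell_left (a+1,b); simpa using this
lemma leftCell_pu1 (a b : ℤ) : leftCell (a,b) (a,b+1) = (a-1,b) := by
  simpa using leftCell_up (a,b)
lemma leftCell_pu2 (a b : ℤ) : leftCell (a,b+1) (a,b) = (a,b) := by
  have := leftCell_down (a,b+1); simpa using this

/-- Description of the two cells adjacent to an edge. -/
lemma leftCell_spec {u v : Vertex} (h : VAdj u v) :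
    leftCell u v ∈ cellsAt u ∧ leftCell u v ∈ cellsAt v ∧
    leftCell v u ∈ cellsAt u ∧ leftCell v u ∈ cellsAt v ∧
    ((leftCell u v).1 + (leftCell u v).2) % 2 ≠ ((leftCell v u).1 + (leftCell v u).2) % 2 := by
  obtain ⟨a, b⟩ := u
  rcases h with h | h | h | h <;> subst h
  · rw [leftCell_pr1, leftCell_pr2]
    refine ⟨?_, ?_, ?_, ?_, by omega⟩ <;> simp [mem_cellsAt_iff, Prod.ext_iff] <;> omega
  · have h1 : ((a:ℤ) - 1, b) = ((a:ℤ)-1, b) := rfl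
    have e1 : leftCell (a,b) ((a:ℤ)-1,b) = ((a:ℤ)-1,b-1) := by
      simpa using leftCell_left (a,b)
    have e2 : leftCell ((a:ℤ)-1,b) (a,b) = ((a:ℤ)-1,b) := by
      have := leftCell_pr1 (a-1) b; simpa using this
    rw [e1, e2]
    refine ⟨?_, ?_, ?_, ?_, by omega⟩ <;> simp [mem_cellsAt_iff, Prod.ext_iff] <;> omega
  · have e1 : leftCell (a,b) (a,(b:ℤ)+1) = ((a:ℤ)-1,b) := by simpa using leftCell_up (a,b)
    have e2 : leftCell (a,(b:ℤ)+1) (a,b) = (a,b) := leftCell_pu2 a b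
    rw [e1, e2]
    refine ⟨?_, ?_, ?_, ?_, by omega⟩ <;> simp [mem_cellsAt_iff, Prod.ext_iff] <;> omega
  · have e1 : leftCell (a,b) (a,(b:ℤ)-1) = (a,(b:ℤ)-1) := by simpa using leftCell_down (a,b)
    have e2 : leftCell (a,(b:ℤ)-1) (a,b) = ((a:ℤ)-1,(b:ℤ)-1) := by
      have := leftCell_pu1 a (b-1); simpa using this
    rw [e1, e2]
    refine ⟨?_, ?_, ?_, ?_, by omega⟩ <;> simp [mem_cellsAt_iff, Prod.ext_iff] <;> omega

lemma black_or (bc : Bool) (c d : Cell) (h : (c.1+c.2) % 2 ≠ (d.1+d.2) % 2) :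
    IsBlack bc c ∨ IsBlack bc d := by
  cases bc <;> simp [IsBlack] <;> omega

end Aux2
section Aux3
variable {bc : Bool} {R : Finset Cell}

/-- A "good edge" of the region: a grid edge with at least one adjacent cell in `R`. -/
def GE (R : Finset Cell) (u v : Vertex) : Prop :=
  VAdj u v ∧ (leftCell u v ∈ R ∨ leftCell v u ∈ R)

lemma GE.symm' {u v : Vertex} (h : GE R u v) : GE R v u :=
  ⟨h.1.symm', h.2.symm⟩

lemma GE.vertex {u v : Vertex} (h : GE R u v) : IsVertexOf R u ∧ IsVertexOf R v := by
  obtain ⟨h1, h2, h3, h4, _⟩ := leftCell_spec h.1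
  rcases h.2 with hc | hc
  · exact ⟨⟨_, h1, hc⟩, ⟨_, h2, hc⟩⟩
  · exact ⟨⟨_, h3, hc⟩, ⟨_, h4, hc⟩⟩

lemma boundary_of_edge {u v : Vertex} (hadj : VAdj u v) (h : IsBoundaryEdge R u v) :
    IsBoundaryVertexOf R u ∧ IsBoundaryVertexOf R v := by
  obtain ⟨h1, h2, h3, h4, _⟩ := leftCell_spec hadj
  rcases h with ⟨hin, hout⟩ | ⟨hout, hin⟩
  · exact ⟨⟨⟨_, h1, hin⟩, ⟨_, h3, hout⟩⟩, ⟨⟨_, h2, hin⟩, ⟨_, h4, hout⟩⟩⟩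
  · exact ⟨⟨⟨_, h3, hin⟩, ⟨_, h1, hout⟩⟩, ⟨⟨_, h4, hin⟩, ⟨_, h2, hout⟩⟩⟩

/-- Trichotomy for good edges. -/
lemma edge_alt (bc : Bool) {u v : Vertex} (h : GE R u v) :
    (leftCell u v ∈ R ∧ IsBlack bc (leftCell u v)) ∨
    (leftCell v u ∈ R ∧ IsBlack bc (leftCell v u)) ∨ IsBoundaryEdge R u v := by
  obtain ⟨_, _, _, _, hpar⟩ := leftCell_spec h.1
  have hb := black_or bc _ _ hpar
  by_cases h1 : leftCell u v ∈ R <;> by_cases h2 : leftCell v u ∈ R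
  · rcases hb with hb | hb
    · exact Or.inl ⟨h1, hb⟩
    · exact Or.inr (Or.inl ⟨h2, hb⟩)
  · rcases hb with hb | hb
    · exact Or.inl ⟨h1, hb⟩
    · exact Or.inr (Or.inr (Or.inl ⟨h1, h2⟩))
  · rcases hb with hb | hb
    · exact Or.inr (Or.inr (Or.inr ⟨h1, h2⟩))
    · exact Or.inr (Or.inl ⟨h2, hb⟩)
  · rcases h.2 with hc | hc
    · exact absurd hc h1
    · exact absurd hc h2

/-- Step bound along a good edge for a complete height function. -/
lemma step_bound {x : Vertex → ℤ} (hx : IsCompleteHeightFn bc R x) {u v : Vertex}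
    (h : GE R u v) : |x v - x u| ≤ 3 := by
  have hu : u ∈ vertexSet R := h.vertex.1
  have hv : v ∈ vertexSet R := h.vertex.2
  rcases edge_alt bc h with ⟨hin, hbl⟩ | ⟨hin, hbl⟩ | hbd
  · rcases (hx.1 u v hu hv h.1).2 hin hbl with h' | h' <;> rw [h'] <;> norm_num
  · rcases (hx.1 v u hv hu h.1.symm').2 hin hbl with h' | h' <;>
      rw [abs_sub_comm, h'] <;> norm_num
  · rw [abs_sub_comm, (hx.1 u v hu hv h.1).1 hbd]; norm_num

end Aux3
section Aux4
variable {bc : Bool} {R : Finset Cell} {c : Cell}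

open Relation

lemma rtg_symm {u v : Vertex} (h : ReflTransGen (GE R) u v) : ReflTransGen (GE R) v u :=
  (@ReflTransGen.stdSymm _ _ ⟨fun _ _ h => h.symm'⟩).symm _ _ h

lemma ge_bottom (hc : c ∈ R) : GE R (c.1, c.2) (c.1+1, c.2) := by
  refine ⟨Or.inl rfl, Or.inl ?_⟩
  rw [show ((c.1+1 : ℤ), c.2) = (((c.1:ℤ),(c.2:ℤ)).1+1, ((c.1:ℤ),(c.2:ℤ)).2) from rfl,
    leftCell_pr1]
  simpa using hc

lemma ge_left (hc : c ∈ R) : GE R (c.1, c.2) (c.1, c.2+1) := by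
  refine ⟨Or.inr (Or.inr (Or.inl rfl)), Or.inr ?_⟩
  rw [leftCell_pu2]; simpa using hc

lemma ge_right (hc : c ∈ R) : GE R (c.1+1, c.2) (c.1+1, c.2+1) := by
  refine ⟨Or.inr (Or.inr (Or.inl rfl)), Or.inl ?_⟩
  rw [leftCell_pu1]; simpa using hc

lemma conn_ll (hc : c ∈ R) {v : Vertex} (hv : c ∈ cellsAt v) :
    ReflTransGen (GE R) (c.1, c.2) v := by
  rcases (mem_cellsAt_iff c v).mp hv with h | h | h | h <;> subst h
  · exact ReflTransGen.refl
  · exact ReflTransGen.single (ge_bottom hc)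
  · exact ReflTransGen.single (ge_left hc)
  · exact ReflTransGen.tail (ReflTransGen.single (ge_bottom hc)) (ge_right hc)

lemma corners_conn (hc : c ∈ R) {v w : Vertex} (hv : c ∈ cellsAt v) (hw : c ∈ cellsAt w) :
    ReflTransGen (GE R) v w :=
  (rtg_symm (conn_ll hc hv)).trans (conn_ll hc hw)

lemma CellAdj.shared {a b : Cell} (h : CellAdj a b) : ∃ v, a ∈ cellsAt v ∧ b ∈ cellsAt v := by
  rcases h with ⟨h1, h2⟩ | ⟨h1, h2⟩
  · rcases (abs_eq (by norm_num)).mp h2 with h2 | h2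
    · exact ⟨(a.1, a.2), by simp [mem_cellsAt_iff, Prod.ext_iff]; omega⟩
    · exact ⟨(a.1, b.2), by simp [mem_cellsAt_iff, Prod.ext_iff]; omega⟩
  · rcases (abs_eq (by norm_num)).mp h2 with h2 | h2
    · exact ⟨(a.1, a.2), by simp [mem_cellsAt_iff, Prod.ext_iff]; omega⟩
    · exact ⟨(b.1, a.2), by simp [mem_cellsAt_iff, Prod.ext_iff]; omega⟩

lemma conn_to (hc : c ∈ R) {c' : Cell}
    (hpath : ReflTransGen (fun x y => CellAdj x y ∧ y ∈ (R : Set Cell)) c c')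
    {v : Vertex} (hv : c ∈ cellsAt v) :
    ∀ w, c' ∈ cellsAt w → ReflTransGen (GE R) v w := by
  induction hpath with
  | refl => exact fun w hw => corners_conn hc hv hw
  | tail _ hstep ih =>
    intro w hw
    obtain ⟨z, hz1, hz2⟩ := hstep.1.shared
    exact (ih z hz1).trans (corners_conn (by simpa using hstep.2) hz2 hw)

lemma vertex_conn (hR : IsSimplyConnectedRegion R) {v w : Vertex}
    (hv : IsVertexOf R v) (hw : IsVertexOf R w) : ReflTransGen (GE R) v w := by
  obtain ⟨cv, hcv1, hcv2⟩ := hv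
  obtain ⟨cw, hcw1, hcw2⟩ := hw
  exact conn_to hcv2 (hR.2.1 cv (by simpa using hcv2) cw (by simpa using hcw2)) hcv1 w hcw1

lemma exists_bd (hR : IsSimplyConnectedRegion R) : ∃ v, IsBoundaryVertexOf R v := by
  obtain ⟨c, hc, hmax⟩ := R.exists_max_image (fun c => c.1) hR.1
  refine ⟨(c.1+1, c.2), ⟨c, ?_, hc⟩, (c.1+1, c.2), ?_, fun h => by have := hmax _ h; omega⟩
  · simp [mem_cellsAt_iff, Prod.ext_iff]
  · simp [mem_cellsAt_iff, Prod.ext_iff]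

end Aux4

section Aux5
variable {bc : Bool} {R : Finset Cell} {V' : Set Vertex} {f g x y : Vertex → ℤ}

lemma min_step (a b a' b' : ℤ) (ha : a' - a = 1 ∨ a' - a = -3) (hb : b' - b = 1 ∨ b' - b = -3)
    (hab : (a - b) % 4 = 0) : min a' b' - min a b = 1 ∨ min a' b' - min a b = -3 := by
  rw [min_def, min_def]; split_ifs <;> omega

lemma max_step (a b a' b' : ℤ) (ha : a' - a = 1 ∨ a' - a = -3) (hb : b' - b = 1 ∨ b' - b = -3)
    (hab : (a - b) % 4 = 0) : max a' b' - max a b = 1 ∨ max a' b' - max a b = -3 := by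
  rw [max_def, max_def]; split_ifs <;> omega

lemma prop_step (hV'bd : boundaryVertexSet R ⊆ V') (hmod : ∀ v ∈ V', f v % 4 = g v % 4)
    (hx : x ∈ Extensions bc R V' f) (hy : y ∈ Extensions bc R V' g)
    {u v : Vertex} (hge : GE R u v) (hu : (x u - y u) % 4 = 0) : (x v - y v) % 4 = 0 := by
  have hu' : u ∈ vertexSet R := hge.vertex.1
  have hv' : v ∈ vertexSet R := hge.vertex.2
  rcases edge_alt bc hge with ⟨hin, hbl⟩ | ⟨hin, hbl⟩ | hbd
  · have h1 := (hx.1.1 u v hu' hv' hge.1).2 hin hbl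
    have h2 := (hy.1.1 u v hu' hv' hge.1).2 hin hbl
    omega
  · have h1 := (hx.1.1 v u hv' hu' hge.1.symm').2 hin hbl
    have h2 := (hy.1.1 v u hv' hu' hge.1.symm').2 hin hbl
    omega
  · have hbv := (boundary_of_edge hge.1 hbd).2
    have hvV' : v ∈ V' := hV'bd hbv
    rw [hx.2 v hvV', hy.2 v hvV']
    have := hmod v hvV'
    omega

lemma rigid (hR : IsSimplyConnectedRegion R) (hV'bd : boundaryVertexSet R ⊆ V')
    (hmod : ∀ v ∈ V', f v % 4 = g v % 4)
    (hx : x ∈ Extensions bc R V' f) (hy : y ∈ Extensions bc R V' g) :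
    ∀ v, (x v - y v) % 4 = 0 := by
  intro v
  by_cases hv : IsVertexOf R v
  · obtain ⟨v₀, hv₀⟩ := exists_bd hR
    have hv₀V' : v₀ ∈ V' := hV'bd hv₀
    have base : (x v₀ - y v₀) % 4 = 0 := by
      rw [hx.2 v₀ hv₀V', hy.2 v₀ hv₀V']
      have := hmod v₀ hv₀V'; omega
    have hpath := vertex_conn hR hv₀.1 hv
    clear hv
    induction hpath with
    | refl => exact base
    | tail _ hstep ih => exact prop_step hV'bd hmod hx hy hstep ih
  · rw [hx.1.2 v hv, hy.1.2 v hv]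
    norm_num
end Aux5
section Aux6
variable {bc : Bool} {R : Finset Cell} {V' : Set Vertex} {f g x y : Vertex → ℤ}

lemma inf_closure (hR : IsSimplyConnectedRegion R) (hV'bd : boundaryVertexSet R ⊆ V')
    (hf : IsPartialHeightFn bc R V' f)
    (hmod : ∀ v ∈ V', f v % 4 = g v % 4) (hle : ∀ v ∈ V', f v ≤ g v + 4)
    (hx : x ∈ Extensions bc R V' f) (hy : y ∈ Extensions bc R V' g) :
    (fun v => min (x v) (y v + 4)) ∈ Extensions bc R V' f := by
  have hrig := rigid hR hV'bd hmod hx hy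
  refine ⟨⟨?_, ?_⟩, ?_⟩
  · intro u v hu hv hadj
    constructor
    · intro hbd
      obtain ⟨hbu, hbv⟩ := boundary_of_edge hadj hbd
      have huV : u ∈ V' := hV'bd hbu
      have hvV : v ∈ V' := hV'bd hbv
      simp only [hx.2 u huV, hx.2 v hvV, hy.2 u huV, hy.2 v hvV,
        min_eq_left (hle u huV), min_eq_left (hle v hvV)]
      exact (hf u v huV hvV hadj).1 hbd
    · intro hin hbl
      have h1 := (hx.1.1 u v hu hv hadj).2 hin hbl
      have h2 := (hy.1.1 u v hu hv hadj).2 hin hbl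
      have hab : (x u - (y u + 4)) % 4 = 0 := by have := hrig u; omega
      exact min_step (x u) (y u + 4) (x v) (y v + 4) h1 (by omega) hab
  · intro v hv
    show min (x v) (y v + 4) = 0
    rw [hx.1.2 v hv, hy.1.2 v hv]
    decide
  · intro v hv
    show min (x v) (y v + 4) = f v
    simp only [hx.2 v hv, hy.2 v hv, min_eq_left (hle v hv)]

lemma sup_closure (hR : IsSimplyConnectedRegion R) (hV'bd : boundaryVertexSet R ⊆ V')
    (hg : IsPartialHeightFn bc R V' g)
    (hmod : ∀ v ∈ V', f v % 4 = g v % 4) (hle : ∀ v ∈ V', f v ≤ g v + 4)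
    (hx : x ∈ Extensions bc R V' f) (hy : y ∈ Extensions bc R V' g) :
    (fun v => max (x v) (y v + 4) - 4) ∈ Extensions bc R V' g := by
  have hrig := rigid hR hV'bd hmod hx hy
  refine ⟨⟨?_, ?_⟩, ?_⟩
  · intro u v hu hv hadj
    constructor
    · intro hbd
      obtain ⟨hbu, hbv⟩ := boundary_of_edge hadj hbd
      have huV : u ∈ V' := hV'bd hbu
      have hvV : v ∈ V' := hV'bd hbv
      have e1 : max (x u) (y u + 4) - 4 = g u := by
        rw [hx.2 u huV, hy.2 u huV, max_eq_right (hle u huV)]; ring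
      have e2 : max (x v) (y v + 4) - 4 = g v := by
        rw [hx.2 v hvV, hy.2 v hvV, max_eq_right (hle v hvV)]; ring
      simp only [e1, e2]
      exact (hg u v huV hvV hadj).1 hbd
    · intro hin hbl
      have h1 := (hx.1.1 u v hu hv hadj).2 hin hbl
      have h2 := (hy.1.1 u v hu hv hadj).2 hin hbl
      have hab : (x u - (y u + 4)) % 4 = 0 := by have := hrig u; omega
      have h3 := max_step (x u) (y u + 4) (x v) (y v + 4) h1 (by omega) hab
      show max (x v) (y v + 4) - 4 - (max (x u) (y u + 4) - 4) = 1 ∨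
        max (x v) (y v + 4) - 4 - (max (x u) (y u + 4) - 4) = -3
      rcases h3 with h3 | h3
      · left; omega
      · right; omega
  · intro v hv
    show max (x v) (y v + 4) - 4 = 0
    rw [hx.1.2 v hv, hy.1.2 v hv]
    norm_num
  · intro v hv
    show max (x v) (y v + 4) - 4 = g v
    rw [hx.2 v hv, hy.2 v hv, max_eq_right (hle v hv)]
    ring
end Aux6

section Aux7
variable {bc : Bool} {R : Finset Cell} {V' : Set Vertex} {f : Vertex → ℤ}

lemma val_bound (hR : IsSimplyConnectedRegion R) (hV'bd : boundaryVertexSet R ⊆ V') (v : Vertex) :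
    ∃ B : ℤ, ∀ x ∈ Extensions bc R V' f, |x v| ≤ B := by
  by_cases hv : IsVertexOf R v
  · obtain ⟨v₀, hv₀⟩ := exists_bd hR
    have hv₀V' : v₀ ∈ V' := hV'bd hv₀
    have hpath := vertex_conn hR hv₀.1 hv
    clear hv
    induction hpath with
    | refl =>
      refine ⟨|f v₀|, fun x hx => ?_⟩
      rw [hx.2 v₀ hv₀V']
    | @tail b c _ hstep ih =>
      obtain ⟨B, hB⟩ := ih
      refine ⟨B + 3, fun x hx => ?_⟩
      have h1 := hB x hx
      have h2 := step_bound hx.1 hstep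
      have h3 := abs_sub_abs_le_abs_sub (x c) (x b)
      linarith [h3]
  · exact ⟨0, fun x hx => by rw [hx.1.2 v hv]; norm_num⟩

lemma ext_finite (hR : IsSimplyConnectedRegion R) (hV'bd : boundaryVertexSet R ⊆ V') :
    (Extensions bc R V' f).Finite := by
  classical
  choose B hB using fun v => val_bound (bc := bc) (V' := V') (f := f) hR hV'bd v
  set VRf : Finset Vertex :=
    R.biUnion (fun c => {(c.1,c.2),(c.1+1,c.2),(c.1,c.2+1),(c.1+1,c.2+1)}) with hVRf
  have hmemVR : ∀ v, IsVertexOf R v → v ∈ VRf := by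
    intro v hv
    obtain ⟨c, hc1, hc2⟩ := hv
    rcases (mem_cellsAt_iff c v).mp hc1 with h | h | h | h <;>
      · subst h
        exact Finset.mem_biUnion.mpr ⟨c, hc2, by simp⟩
  set r : (Vertex → ℤ) → ({v // v ∈ VRf} → ℤ) := fun x w => x w.1 with hr
  apply Set.Finite.of_finite_image (f := r)
  · apply Set.Finite.subset (Set.Finite.pi (fun w : {v // v ∈ VRf} =>
      Set.finite_Icc (-(B w.1)) (B w.1)))
    rintro _ ⟨x, hx, rfl⟩
    intro w _
    have := hB w.1 x hx
    have := abs_le.mp this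
    simp only [hr, Set.mem_Icc]
    exact this
  · intro x hx x' hx' hxx
    funext v
    by_cases hv : IsVertexOf R v
    · exact congrFun hxx ⟨v, hmemVR v hv⟩
    · rw [hx.1.2 v hv, hx'.1.2 v hv]
end Aux7

open scoped FinsetFamily

/-- Corollary 18: comparison of average heights. -/
theorem statement11 (bc : Bool) (R : Finset Cell) (hR : IsSimplyConnectedRegion R)
    (V' : Set Vertex) (hV'sub : V' ⊆ vertexSet R) (hV'conn : VConnected V')
    (hV'bd : boundaryVertexSet R ⊆ V')
    (f g : Vertex → ℤ)
    (hf : IsPartialHeightFn bc R V' f) (hg : IsPartialHeightFn bc R V' g)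
    (hmod : ∀ v ∈ V', f v % 4 = g v % 4)
    (hle : ∀ v ∈ V', f v ≤ g v + 4)
    (hfext : (Extensions bc R V' f).Nonempty) (hgext : (Extensions bc R V' g).Nonempty) :
    ∀ v ∈ vertexSet R,
      heightExp (Extensions bc R V' f) v ≤ heightExp (Extensions bc R V' g) v + 4 := by
  classical
  intro v _
  have hFfin : (Extensions bc R V' f).Finite := ext_finite hR hV'bd
  have hGfin : (Extensions bc R V' g).Finite := ext_finite hR hV'bd
  set Fs : Finset (Vertex → ℤ) := hFfin.toFinset with hFs
  set Gs : Finset (Vertex → ℤ) := hGfin.toFinset with hGs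
  set sh : (Vertex → ℤ) → (Vertex → ℤ) := fun y w => y w + 4 with hsh
  have hshinj : Function.Injective sh := by
    intro a b hab
    funext w
    have := congrFun hab w
    simpa [hsh] using this
  set Gs' : Finset (Vertex → ℤ) := Gs.image sh with hGs'
  -- lattice closure
  have hinf : ∀ a ∈ Fs, ∀ b ∈ Gs', a ⊓ b ∈ Fs := by
    intro a ha b hb
    obtain ⟨y, hy, rfl⟩ := Finset.mem_image.mp hb
    have ha' := hFfin.mem_toFinset.mp ha
    have hy' := hGfin.mem_toFinset.mp hy
    have he : a ⊓ sh y = fun w => min (a w) (y w + 4) := by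
      funext w; simp [hsh, Pi.inf_apply]
    rw [hFfin.mem_toFinset, he]
    exact inf_closure hR hV'bd hf hmod hle ha' hy'
  have hsup : ∀ a ∈ Fs, ∀ b ∈ Gs', a ⊔ b ∈ Gs' := by
    intro a ha b hb
    obtain ⟨y, hy, rfl⟩ := Finset.mem_image.mp hb
    have ha' := hFfin.mem_toFinset.mp ha
    have hy' := hGfin.mem_toFinset.mp hy
    refine Finset.mem_image.mpr ⟨fun w => max (a w) (y w + 4) - 4,
      hGfin.mem_toFinset.mpr (sup_closure hR hV'bd hg hmod hle ha' hy'), ?_⟩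
    funext w
    simp [hsh, Pi.sup_apply]
  have hinfs : Fs ⊼ Gs' ⊆ Fs := by
    intro a ha
    obtain ⟨x, hx, y, hy, rfl⟩ := Finset.mem_infs.mp ha
    exact hinf x hx y hy
  have hsups : Fs ⊻ Gs' ⊆ Gs' := by
    intro a ha
    obtain ⟨x, hx, y, hy, rfl⟩ := Finset.mem_sups.mp ha
    exact hsup x hx y hy
  -- nonemptiness
  have hFne : Fs.Nonempty := by
    obtain ⟨x, hx⟩ := hfext; exact ⟨x, hFfin.mem_toFinset.mpr hx⟩
  have hGne : Gs.Nonempty := by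
    obtain ⟨x, hx⟩ := hgext; exact ⟨x, hGfin.mem_toFinset.mpr hx⟩
  have hG'ne : Gs'.Nonempty := hGne.image sh
  have hune : (Fs ∪ Gs').Nonempty := hFne.mono Finset.subset_union_left
  -- lower bound m
  obtain ⟨m, hmF, hmG⟩ : ∃ m : ℤ, (∀ a ∈ Fs, m ≤ a v) ∧ (∀ a ∈ Gs', m ≤ a v) :=
    ⟨(Fs ∪ Gs').inf' hune (fun a => a v),
      fun a ha => Finset.inf'_le _ (Finset.mem_union_left _ ha),
      fun a ha => Finset.inf'_le _ (Finset.mem_union_right _ ha)⟩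
  -- four functions theorem
  have hφ0 : (0 : (Vertex → ℤ) → ℤ) ≤ fun a => max (a v - m) 0 := fun a => le_max_right _ _
  have h1 : (0 : (Vertex → ℤ) → ℤ) ≤ fun _ => (1:ℤ) := fun a => zero_le_one
  have hmain : ∀ a b : Vertex → ℤ, (fun a => max (a v - m) 0) a * (fun _ => (1:ℤ)) b ≤
      (fun _ => (1:ℤ)) (a ⊓ b) * (fun a => max (a v - m) 0) (a ⊔ b) := by
    intro a b
    show max (a v - m) 0 * 1 ≤ 1 * max ((a ⊔ b) v - m) 0
    have hav : a v ≤ (a ⊔ b) v := by rw [Pi.sup_apply]; exact le_sup_left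
    rw [mul_one, one_mul]
    exact max_le_max (by omega) le_rfl
  have esum : ∀ (s : Finset (Vertex → ℤ)), (∀ a ∈ s, m ≤ a v) →
      ∑ a ∈ s, max (a v - m) 0 = (∑ a ∈ s, a v) - s.card * m := by
    intro s hs
    have hcongr : ∑ a ∈ s, max (a v - m) 0 = ∑ a ∈ s, (a v - m) := by
      apply Finset.sum_congr rfl
      intro a ha
      have := hs a ha
      omega
    rw [hcongr, Finset.sum_sub_distrib, Finset.sum_const, nsmul_eq_mul]
  have h4f := four_functions_theorem (fun a => max (a v - m) 0) (fun _ => (1:ℤ))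
    (fun _ => (1:ℤ)) (fun a => max (a v - m) 0) hφ0 h1 h1 hφ0 hmain Fs Gs'
  simp only [Finset.sum_const, nsmul_eq_mul, mul_one] at h4f
  rw [esum Fs hmF] at h4f
  -- bound the right-hand side
  have hb1 : (((Fs ⊼ Gs').card : ℤ)) ≤ (Fs.card : ℤ) := by
    exact_mod_cast Finset.card_le_card hinfs
  have hb2 : ∑ a ∈ Fs ⊻ Gs', max (a v - m) 0 ≤ ∑ a ∈ Gs', max (a v - m) 0 :=
    Finset.sum_le_sum_of_subset_of_nonneg hsups (fun i _ _ => le_max_right _ _)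
  have hb3 : (0:ℤ) ≤ ∑ a ∈ Fs ⊻ Gs', max (a v - m) 0 :=
    Finset.sum_nonneg (fun i _ => le_max_right _ _)
  have key1 : ((∑ a ∈ Fs, a v) - Fs.card * m) * Gs'.card ≤
      (Fs.card : ℤ) * ((∑ a ∈ Gs', a v) - Gs'.card * m) := by
    calc ((∑ a ∈ Fs, a v) - Fs.card * m) * Gs'.card
        ≤ ((Fs ⊼ Gs').card : ℤ) * ∑ a ∈ Fs ⊻ Gs', max (a v - m) 0 := h4f
      _ ≤ (Fs.card : ℤ) * ∑ a ∈ Gs', max (a v - m) 0 :=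
          mul_le_mul hb1 hb2 hb3 (by positivity)
      _ = (Fs.card : ℤ) * ((∑ a ∈ Gs', a v) - Gs'.card * m) := by rw [esum Gs' hmG]
  have key2 : (∑ a ∈ Fs, a v) * Gs'.card ≤ (Fs.card : ℤ) * ∑ a ∈ Gs', a v := by
    nlinarith [key1]
  -- translate `Gs'` data back to `Gs`
  have ecard : Gs'.card = Gs.card := Finset.card_image_of_injective _ hshinj
  have esG : ∑ a ∈ Gs', a v = (∑ a ∈ Gs, a v) + 4 * Gs.card := by
    rw [hGs', Finset.sum_image (fun a _ b _ h => hshinj h)]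
    show ∑ a ∈ Gs, (a v + 4) = _
    rw [Finset.sum_add_distrib, Finset.sum_const, nsmul_eq_mul]
    ring
  have key3 : (∑ a ∈ Fs, a v) * Gs.card ≤
      (Fs.card : ℤ) * ((∑ a ∈ Gs, a v) + 4 * Gs.card) := by
    rw [ecard, esG] at key2
    exact key2
  -- pass to the reals
  have hcF : (0:ℝ) < (Fs.card : ℝ) := by exact_mod_cast Finset.card_pos.mpr hFne
  have hcG : (0:ℝ) < (Gs.card : ℝ) := by exact_mod_cast Finset.card_pos.mpr hGne
  have eEF : heightExp (Extensions bc R V' f) v = ((∑ a ∈ Fs, a v : ℤ) : ℝ) / (Fs.card : ℝ) := by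
    rw [heightExp, ← hFfin.coe_toFinset, finsum_mem_coe_finset, Set.ncard_coe_finset]
    push_cast
    rfl
  have eEG : heightExp (Extensions bc R V' g) v = ((∑ a ∈ Gs, a v : ℤ) : ℝ) / (Gs.card : ℝ) := by
    rw [heightExp, ← hGfin.coe_toFinset, finsum_mem_coe_finset, Set.ncard_coe_finset]
    push_cast
    rfl
  rw [eEF, eEG]
  have key4 : ((∑ a ∈ Fs, a v : ℤ) : ℝ) * (Gs.card : ℝ) ≤
      (Fs.card : ℝ) * (((∑ a ∈ Gs, a v : ℤ) : ℝ) + 4 * (Gs.card : ℝ)) := by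
    exact_mod_cast key3
  rw [div_le_iff₀ hcF, div_add' _ _ _ hcG.ne']
  rw [div_mul_eq_mul_div, le_div_iff₀ hcG]
  nlinarith [key4]
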